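/- For X ⊆ [2, n], the number of permutations in S_n whose descent top set equals X exactly is given by inclusion-exclusion: |R(n−1, X)| = Σ_{J ⊆ X} (−1)^{|X∖J|} α(J)!̂. -/

import Mathlib

/-!
Both sides are inclusion–exclusion over the Boolean lattice below `X`, so it suffices that
`#{σ | DT σ ⊆ J} = α(J)!̂` for every `J ⊆ [2, n+1]`.

Every permutation of `n + 2` letters arises exactly once by inserting the letter `0` into the
word of a permutation `τ` of `n + 1` letters shifted up by one. The descents of `τ` survive with
their tops raised by one, and the only new descent top is the letter just before the inserted `0`.
Hence the admissible insertion points are the front and the places after a letter whose raised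
value lies in `J`: there are `1 + #{x ∈ J | 2 ≤ x}` of them. Iterating,
`#{σ | DT σ ⊆ J} = ∏_{v=2}^{n+1} (1 + #{x ∈ J | v ≤ x})`, and grouping the factors by the gaps
`x_{j-1} < v ≤ x_j`, on which `#{x ∈ J | v ≤ x} = k - j + 1`, gives `α(J)!̂`.
-/

open Finset

/-- Positions of descents of a permutation of `Fin (n+1)` in one-line notation. -/
def descSet (n : ℕ) (σ : Equiv.Perm (Fin (n+1))) : Finset (Fin n) :=
  Finset.univ.filter (fun i : Fin n => σ i.succ < σ i.castSucc)

def des (n : ℕ) (σ : Equiv.Perm (Fin (n+1))) : ℕ := (descSet n σ).card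

/-- Descent top set, with values written 1-based (so `DT n σ ⊆ [2, n+1]`). -/
def DT (n : ℕ) (σ : Equiv.Perm (Fin (n+1))) : Finset ℕ :=
  (descSet n σ).image (fun i => (σ i.castSucc : ℕ) + 1)

/-- `β!̂ = (k+1)^{β₁} k^{β₂} ⋯ 2^{β_k}` for a tuple `β` of length `k`. -/
def hatFac (β : List ℕ) : ℕ :=
  (β.zipIdx.map (fun p => (β.length + 1 - p.2) ^ p.1)).prod

/-- `α(X)!̂` where, for `X = {x₁ < … < x_k}`, `α(X) = (x₁ - 1, x₂ - x₁, …, x_k - x_{k-1})`. -/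
def alphaHat (X : Finset ℕ) : ℕ :=
  hatFac (List.zipWith (fun a b => b - a) (1 :: X.sort (· ≤ ·)) (X.sort (· ≤ ·)))

section Inversion

variable {α R : Type*} [DecidableEq α] [CommRing R]

lemma sum_Icc_neg_one_pow_card_sdiff (I X : Finset α) :
    ∑ J ∈ Icc I X, (-1 : R) ^ #(X \ J) = if I = X then 1 else 0 := by
  by_cases hIX : I ⊆ X
  · have hcompl : ∑ J ∈ Icc I X, (-1 : R) ^ #(X \ J) = ∑ K ∈ (X \ I).powerset, (-1) ^ #K := by
      refine sum_nbij' (X \ ·) (X \ ·) ?_ ?_ ?_ ?_ fun _ _ => rfl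
      · intro J hJ
        simp only [mem_Icc, mem_powerset] at hJ ⊢
        exact sdiff_subset_sdiff subset_rfl hJ.1
      · intro K hK
        simp only [mem_Icc, mem_powerset] at hK ⊢
        exact ⟨subset_sdiff.mpr ⟨hIX, (disjoint_of_subset_left hK sdiff_disjoint).symm⟩,
          sdiff_subset⟩
      · intro J hJ
        exact Finset.sdiff_sdiff_eq_self (mem_Icc.mp hJ).2
      · intro K hK
        exact Finset.sdiff_sdiff_eq_self ((mem_powerset.mp hK).trans sdiff_subset)
    have hsum := congrArg (Int.cast : ℤ → R) (sum_powerset_neg_one_pow_card (x := X \ I))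
    push_cast at hsum
    rw [hcompl, hsum]
    exact if_congr (sdiff_eq_empty_iff_subset.trans ⟨subset_antisymm hIX, fun h => h.ge⟩) rfl rfl
  · rw [Icc_eq_empty hIX, sum_empty, if_neg (fun h => hIX h.le)]

lemma sum_powerset_neg_one_pow_card_sdiff_mul_sum_powerset (f : Finset α → R) (X : Finset α) :
    ∑ J ∈ X.powerset, (-1 : R) ^ #(X \ J) * ∑ I ∈ J.powerset, f I = f X := by
  calc ∑ J ∈ X.powerset, (-1 : R) ^ #(X \ J) * ∑ I ∈ J.powerset, f I
      = ∑ I ∈ X.powerset, (∑ J ∈ Icc I X, (-1 : R) ^ #(X \ J)) * f I := by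
        simp_rw [mul_sum, sum_mul]
        refine sum_comm' fun J I => ?_
        simp only [mem_powerset, mem_Icc]
        exact ⟨fun h => ⟨⟨h.2, h.1⟩, h.2.trans h.1⟩, fun h => ⟨h.1.2, h.1.1⟩⟩
    _ = f X := by simp [sum_Icc_neg_one_pow_card_sdiff]

end Inversion

lemma card_filter_subset_eq_sum_card_filter_eq {ι α : Type*} [DecidableEq α] (s : Finset ι)
    (f : ι → Finset α) (J : Finset α) :
    #{i ∈ s | f i ⊆ J} = ∑ I ∈ J.powerset, #{i ∈ s | f i = I} := by
  rw [card_eq_sum_card_fiberwise fun i hi => mem_powerset.mpr (mem_filter.mp hi).2]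
  refine sum_congr rfl fun I hI => ?_
  rw [filter_filter]
  exact congrArg card (filter_congr fun i _ => ⟨And.right, fun h => ⟨h ▸ mem_powerset.mp hI, h⟩⟩)

lemma card_filter_le_image_pred {J : Finset ℕ} {v : ℕ} (hv : 1 ≤ v) :
    #{x ∈ J.image (· - 1) | v ≤ x} = #{x ∈ J | v + 1 ≤ x} := by
  rw [filter_image, card_image_of_injOn fun x hx y hy (h : x - 1 = y - 1) => ?_]
  · exact congrArg card (filter_congr fun x _ => by omega)
  · simp only [coe_filter, Set.mem_ofPred_eq] at hx hy
    omega

lemma hatFac_cons (b : ℕ) (l : List ℕ) : hatFac (b :: l) = (l.length + 2) ^ b * hatFac l := by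
  simp only [hatFac, List.zipIdx_cons', List.map_cons, List.map_map, List.prod_cons,
    List.length_cons]
  congr 2
  refine List.map_congr_left fun ⟨a, i⟩ _ => ?_
  simp

lemma hatFac_zipWith_sub_eq_prod {c N : ℕ} {L : List ℕ} (hL : (c :: L).Pairwise (· ≤ ·))
    (hN : ∀ x ∈ L, x ≤ N) :
    hatFac (List.zipWith (fun a b => b - a) (c :: L) L) =
      ∏ v ∈ Ioc c N, (L.countP (v ≤ ·) + 1) := by
  induction L generalizing c with
  | nil => simp [hatFac]
  | cons x t ih =>
    obtain ⟨hcx, hx⟩ := List.pairwise_cons.mp hL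
    have hxt := (List.pairwise_cons.mp hx).1
    have below : ∀ v ∈ Ioc c x, (x :: t).countP (v ≤ ·) = t.length + 1 := by
      intro v hv
      refine List.countP_eq_length.mpr fun y hy => ?_
      rcases List.mem_cons.mp hy with rfl | hy
      · simpa using (mem_Ioc.mp hv).2
      · simpa using (mem_Ioc.mp hv).2.trans (hxt y hy)
    have above : ∀ v ∈ Ioc x N, (x :: t).countP (v ≤ ·) = t.countP (v ≤ ·) := by
      intro v hv
      rw [List.countP_cons_of_neg]
      simpa using (mem_Ioc.mp hv).1
    rw [List.zipWith_cons_cons, hatFac_cons, List.length_zipWith, ih hx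
      (fun y hy => hN y (List.mem_cons_of_mem x hy)),
      ← prod_Ioc_consecutive _ (hcx x List.mem_cons_self) (hN x List.mem_cons_self),
      prod_congr rfl fun v hv => congrArg (· + 1) (below v hv), prod_const, Nat.card_Ioc,
      prod_congr rfl fun v hv => congrArg (· + 1) (above v hv)]
    simp

lemma alphaHat_eq_prod {N : ℕ} {J : Finset ℕ} (hJ : J ⊆ Icc 1 N) :
    alphaHat J = ∏ v ∈ Ioc 1 N, (#{x ∈ J | v ≤ x} + 1) := by
  have hsorted : (1 :: J.sort (· ≤ ·)).Pairwise (· ≤ ·) :=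
    List.pairwise_cons.mpr ⟨fun x hx => (mem_Icc.mp (hJ ((mem_sort _).mp hx))).1,
      pairwise_sort J _⟩
  rw [alphaHat, hatFac_zipWith_sub_eq_prod hsorted
    fun x hx => (mem_Icc.mp (hJ ((mem_sort _).mp hx))).2]
  refine prod_congr rfl fun v _ => ?_
  rw [← Multiset.coe_countP, sort_eq, Multiset.countP_eq_card_filter, card_def, filter_val]

lemma Fin.val_succAbove {n : ℕ} (p : Fin (n + 1)) (i : Fin n) :
    (p.succAbove i : ℕ) = if (i : ℕ) < p then (i : ℕ) else i + 1 := by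
  unfold Fin.succAbove
  split_ifs <;> simp_all [Fin.lt_def]

lemma mem_DT_iff {n : ℕ} {σ : Equiv.Perm (Fin (n + 1))} {a : ℕ} :
    a ∈ DT n σ ↔ ∃ i j : Fin (n + 1), (j : ℕ) = i + 1 ∧ σ j < σ i ∧ (σ i : ℕ) + 1 = a := by
  simp only [DT, descSet, mem_image, mem_filter, mem_univ, true_and]
  constructor
  · rintro ⟨i, hdes, rfl⟩
    exact ⟨i.castSucc, i.succ, rfl, hdes, rfl⟩
  · rintro ⟨i, j, hij, hdes, rfl⟩
    have hi : (i : ℕ) < n := by omega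
    have hcast : (⟨i, hi⟩ : Fin n).castSucc = i := rfl
    have hsucc : (⟨i, hi⟩ : Fin n).succ = j := Fin.ext hij.symm
    exact ⟨⟨i, hi⟩, by rwa [hcast, hsucc], by rw [hcast]⟩

section InsertMin

variable {n : ℕ}

/-- In one-line notation: the word of `τ` with every letter raised by one and the letter `0`
inserted at position `p`. -/
def insertMin (p : Fin (n + 2)) (τ : Equiv.Perm (Fin (n + 1))) : Equiv.Perm (Fin (n + 2)) :=
  (finSuccEquiv' p).trans (τ.optionCongr.trans (finSuccEquiv (n + 1)).symm)

variable (p : Fin (n + 2)) (τ : Equiv.Perm (Fin (n + 1)))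

@[simp]
lemma insertMin_apply_self : insertMin p τ p = 0 := by
  simp [insertMin]

@[simp]
lemma insertMin_apply_succAbove (i : Fin (n + 1)) :
    insertMin p τ (p.succAbove i) = (τ i).succ := by
  simp [insertMin]

lemma insertMin_injective : Function.Injective (Function.uncurry (insertMin (n := n))) := by
  rintro ⟨p, τ⟩ ⟨p', τ'⟩ h
  simp only [Function.uncurry_apply_pair] at h
  obtain rfl : p = p' :=
    (insertMin p τ).injective (by rw [insertMin_apply_self, h, insertMin_apply_self])
  refine Prod.ext rfl (Equiv.ext fun i => Fin.succ_injective _ ?_)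
  simpa using congrArg (· (p.succAbove i)) h

lemma insertMin_bijective : Function.Bijective (Function.uncurry (insertMin (n := n))) := by
  refine (Fintype.bijective_iff_injective_and_card _).mpr ⟨insertMin_injective, ?_⟩
  simp [Fintype.card_perm, Nat.factorial_succ]

lemma mem_DT_insertMin {a : ℕ} :
    a ∈ DT (n + 1) (insertMin p τ) ↔
      (∃ k : Fin (n + 1), k.succ = p ∧ (τ k : ℕ) + 2 = a) ∨ ∃ b ∈ DT n τ, b + 1 = a := by
  rw [mem_DT_iff]
  constructor
  · rintro ⟨i, j, hij, hdes, rfl⟩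
    obtain ⟨k, rfl⟩ := Fin.exists_succAbove_eq (x := i) (y := p) (by
      rintro rfl
      simp at hdes)
    rw [insertMin_apply_succAbove, Fin.val_succ]
    rcases eq_or_ne j p with rfl | hj
    · refine Or.inl ⟨k, Fin.ext ?_, rfl⟩
      rw [Fin.val_succAbove] at hij
      rw [Fin.val_succ]
      split_ifs at hij <;> omega
    · obtain ⟨l, rfl⟩ := Fin.exists_succAbove_eq hj
      rw [insertMin_apply_succAbove, insertMin_apply_succAbove, Fin.succ_lt_succ_iff] at hdes
      refine Or.inr ⟨τ k + 1, mem_DT_iff.mpr ⟨k, l, ?_, hdes, rfl⟩, rfl⟩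
      rw [Fin.val_succAbove, Fin.val_succAbove] at hij
      split_ifs at hij <;> omega
  · rintro (⟨k, rfl, rfl⟩ | ⟨b, hb, rfl⟩)
    · refine ⟨k.succ.succAbove k, k.succ, ?_, ?_, ?_⟩
      · simp
      · rw [insertMin_apply_self, insertMin_apply_succAbove]
        exact Fin.succ_pos _
      · rw [insertMin_apply_succAbove, Fin.val_succ]
    · obtain ⟨k, l, hkl, hdes, rfl⟩ := mem_DT_iff.mp hb
      -- If `0` lands between `k` and `l`, the letter before it still has top `τ k + 2`.
      by_cases hkp : (k : ℕ) + 1 = p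
      · refine ⟨p.succAbove k, p, ?_, by simp [Fin.succ_pos], by simp⟩
        rw [Fin.val_succAbove, if_pos (by omega)]
        omega
      · refine ⟨p.succAbove k, p.succAbove l, ?_, by simpa using hdes, by simp⟩
        rw [Fin.val_succAbove, Fin.val_succAbove]
        split_ifs <;> omega

end InsertMin

section Count

variable {n : ℕ}

lemma card_admissible_insertion_positions (τ : Equiv.Perm (Fin (n + 1))) {J : Finset ℕ}
    (hJ : J ⊆ Iic (n + 2)) :
    #{p : Fin (n + 2) | ∀ k : Fin (n + 1), k.succ = p → (τ k : ℕ) + 2 ∈ J} =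
      #{x ∈ J | 2 ≤ x} + 1 := by
  have hsucc : #{p : Fin (n + 2) | ∀ k : Fin (n + 1), k.succ = p → (τ k : ℕ) + 2 ∈ J} =
      #{k : Fin (n + 1) | (τ k : ℕ) + 2 ∈ J} + 1 := by
    rw [card_filter, Fin.sum_univ_succ, card_filter, add_comm]
    simp [Fin.succ_inj]
  rw [hsucc]
  congr 1
  refine card_bij (fun k _ => (τ k : ℕ) + 2) (fun k hk => ?_) (fun k _ k' _ h => ?_) fun x hx => ?_
  · simp only [mem_filter, mem_univ, true_and] at hk ⊢
    exact ⟨hk, by omega⟩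
  · exact τ.injective (Fin.ext (by simpa using h))
  · obtain ⟨hxJ, hx2⟩ := mem_filter.mp hx
    have hxn := mem_Iic.mp (hJ hxJ)
    exact ⟨τ.symm ⟨x - 2, by omega⟩, by simp [show x - 2 + 2 = x by omega, hxJ], by simp; omega⟩

lemma one_le_of_mem_DT {σ : Equiv.Perm (Fin (n + 1))} {b : ℕ} (hb : b ∈ DT n σ) : 1 ≤ b := by
  obtain ⟨i, j, -, -, rfl⟩ := mem_DT_iff.mp hb
  omega

lemma DT_insertMin_subset_iff (p : Fin (n + 2)) (τ : Equiv.Perm (Fin (n + 1))) (J : Finset ℕ) :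
    DT (n + 1) (insertMin p τ) ⊆ J ↔
      DT n τ ⊆ J.image (· - 1) ∧ ∀ k : Fin (n + 1), k.succ = p → (τ k : ℕ) + 2 ∈ J := by
  simp only [subset_iff, mem_DT_insertMin, mem_image]
  constructor
  · intro h
    refine ⟨fun b hb => ⟨b + 1, h (Or.inr ⟨b, hb, rfl⟩), rfl⟩, fun k hk => h (Or.inl ⟨k, hk, rfl⟩)⟩
  · rintro ⟨hDT, hp⟩ a (⟨k, hk, rfl⟩ | ⟨b, hb, rfl⟩)
    · exact hp k hk
    · obtain ⟨x, hx, hxb⟩ := hDT hb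
      have := one_le_of_mem_DT hb
      rwa [show b + 1 = x by omega]

lemma card_DT_subset_succ {J : Finset ℕ} (hJ : J ⊆ Iic (n + 2)) :
    #{σ : Equiv.Perm (Fin (n + 2)) | DT (n + 1) σ ⊆ J} =
      (#{x ∈ J | 2 ≤ x} + 1) * #{τ : Equiv.Perm (Fin (n + 1)) | DT n τ ⊆ J.image (· - 1)} := by
  calc #{σ : Equiv.Perm (Fin (n + 2)) | DT (n + 1) σ ⊆ J}
      = ∑ x : Fin (n + 2) × Equiv.Perm (Fin (n + 1)),
          if DT (n + 1) (insertMin x.1 x.2) ⊆ J then 1 else 0 := by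
        rw [card_filter]
        exact (insertMin_bijective.sum_comp (fun σ => if DT (n + 1) σ ⊆ J then 1 else 0)).symm
    _ = ∑ τ : Equiv.Perm (Fin (n + 1)), if DT n τ ⊆ J.image (· - 1) then
          #{p : Fin (n + 2) | ∀ k : Fin (n + 1), k.succ = p → (τ k : ℕ) + 2 ∈ J} else 0 := by
        rw [Fintype.sum_prod_type_right]
        simp_rw [DT_insertMin_subset_iff, ite_and, card_filter]
        simp only [sum_ite_irrel, sum_const_zero]
    _ = _ := by
        simp_rw [card_admissible_insertion_positions _ hJ]
        rw [← sum_filter, sum_const, smul_eq_mul, mul_comm]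

end Count

lemma card_DT_subset_eq_prod {n : ℕ} {J : Finset ℕ} (hJ : J ⊆ Iic (n + 1)) :
    #{σ : Equiv.Perm (Fin (n + 1)) | DT n σ ⊆ J} =
      ∏ v ∈ Ioc 1 (n + 1), (#{x ∈ J | v ≤ x} + 1) := by
  induction n generalizing J with
  | zero => simp [DT, descSet]
  | succ n ih =>
    have hJ' : J.image (· - 1) ⊆ Iic (n + 1) := fun x hx => by
      obtain ⟨y, hy, rfl⟩ := mem_image.mp hx
      have := mem_Iic.mp (hJ hy)
      exact mem_Iic.mpr (by omega)
    rw [card_DT_subset_succ hJ, ih hJ', ← prod_Ioc_consecutive _ (by omega : 1 ≤ 2)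
      (by omega : 2 ≤ n + 1 + 1), Nat.Ioc_succ_singleton, prod_singleton,
      ← map_add_right_Ioc 1 (n + 1) 1, prod_map]
    congr 1
    exact prod_congr rfl fun v hv => by
      rw [card_filter_le_image_pred (mem_Ioc.mp hv).1.le]
      rfl

/-- Inclusion–exclusion formula for the number of permutations whose descent top set is
exactly `X`. -/
theorem card_DT_eq (n : ℕ) (X : Finset ℕ) (hX : X ⊆ Finset.Icc 2 (n+1)) :
    ((Finset.univ.filter (fun σ : Equiv.Perm (Fin (n+1)) => DT n σ = X)).card : ℤ) =
      ∑ J ∈ X.powerset, (-1 : ℤ) ^ ((X \ J).card) * alphaHat J := by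
  have halpha : ∀ J ∈ X.powerset,
      (alphaHat J : ℤ) = ∑ I ∈ J.powerset, (#{σ : Equiv.Perm (Fin (n + 1)) | DT n σ = I} : ℤ) := by
    intro J hJ
    have hJX : J ⊆ Icc 2 (n + 1) := (mem_powerset.mp hJ).trans hX
    rw [alphaHat_eq_prod (hJX.trans (Icc_subset_Icc_left one_le_two)),
      ← card_DT_subset_eq_prod (hJX.trans Icc_subset_Iic_self),
      card_filter_subset_eq_sum_card_filter_eq]
    push_cast
    rfl
  rw [sum_congr rfl fun J hJ => by rw [halpha J hJ],
    sum_powerset_neg_one_pow_card_sdiff_mul_sum_powerset]
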